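/- arXiv:1506.06515 — 2 statements merged into one kernel-verified Lean document; each statement's English description precedes it below -/
import Mathlib

section
/- Let 𝒢 be a sequence of covers with inverse limit (X,f). Let n ∈ ℕ, l ≥ 1 and m ≥ n + l. Then every walk w ∈ φ_{m,n}(W(G_m,l)) is ∞-projective, i.e. there exists x ∈ X with w = (φ_{∞,n}(x), φ_{∞,n}(f(x)), …, φ_{∞,n}(f^l(x))). -/
open Filter Topology MeasureTheory

/-- A (directed) graph on a vertex set `V`: an edge relation `E ⊆ V × V`
whose two coordinate projections are surjective. -/
structure DirGraph (V : Type) : Type where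
  E : Set (V × V)
  surj_init : ∀ v : V, ∃ u : V, (v, u) ∈ E
  surj_term : ∀ v : V, ∃ u : V, (u, v) ∈ E

/-- A walk of length `l` in `G`. -/
def IsWalk {V : Type} (G : DirGraph V) (l : ℕ) (w : Fin (l + 1) → V) : Prop :=
  ∀ i : Fin l, (w i.castSucc, w i.succ) ∈ G.E

/-- The edge set of a walk. -/
def walkEdges {V : Type} {l : ℕ} (w : Fin (l + 1) → V) : Set (V × V) :=
  {e | ∃ i : Fin l, e = (w i.castSucc, w i.succ)}

/-- `c` is the edge set of a circuit of `G`: a closed walk whose vertices are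
pairwise distinct except that the initial and terminal vertices coincide. -/
def IsCircuitIn {V : Type} (G : DirGraph V) (c : Set (V × V)) : Prop :=
  ∃ l : ℕ, 0 < l ∧ ∃ w : Fin (l + 1) → V,
    IsWalk G l w ∧ w (Fin.last l) = w 0 ∧
    (∀ i j : Fin (l + 1), i < j → w i = w j → i = 0 ∧ j = Fin.last l) ∧
    c = walkEdges w

/-- The set `𝒞(G)` of circuit graphs of `G` (a circuit graph is identified
with its edge set). -/
def circuitsOf {V : Type} (G : DirGraph V) : Set (Set (V × V)) :=
  {c | IsCircuitIn G c}

/-- The vertex set of a circuit graph (given by its edge set). -/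
def circVerts {V : Type} (c : Set (V × V)) : Set V :=
  {v | ∃ e ∈ c, v = e.1 ∨ v = e.2}

/-- The element `Σ_{e ∈ E(c)} e` of the vector space with basis the edges,
associated with a circuit graph `c`. -/
noncomputable def circVec {V : Type} (c : Set (V × V)) : V × V → ℝ :=
  c.indicator fun _ => 1

/-- `c̃ = (1/Per(c))·c` where `Per(c)` is the number of edges of `c`. -/
noncomputable def circTilde {V : Type} (c : Set (V × V)) : V × V → ℝ :=
  fun e => ((Set.ncard c : ℝ))⁻¹ * circVec c e

/-- Membership in `ℳ(G)`: nonnegative coefficients supported on the edges. -/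
def MemM {V : Type} [Fintype V] (G : DirGraph V) (a : V × V → ℝ) : Prop :=
  (∀ e, 0 ≤ a e) ∧ ∀ e, e ∉ G.E → a e = 0

/-- Membership in `ℐ(G)`: at every vertex the incoming coefficient sum equals
the outgoing coefficient sum. -/
def MemI {V : Type} [Fintype V] (G : DirGraph V) (a : V × V → ℝ) : Prop :=
  MemM G a ∧ ∀ v : V, (∑ u : V, a (u, v)) = ∑ u : V, a (v, u)

/-- Membership in `𝒫(G)`: elements of `ℐ(G)` of total mass `1`. -/
def MemP {V : Type} [Fintype V] (G : DirGraph V) (a : V × V → ℝ) : Prop :=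
  MemI G a ∧ (∑ e : V × V, a e) = 1

/-- The action of a map on edges. -/
def edgeMap {V₁ V₂ : Type} (ψ : V₁ → V₂) (e : V₁ × V₁) : V₂ × V₂ := (ψ e.1, ψ e.2)

/-- `ψ : G₁ → G₂` is a cover: an edge-surjective, positive-directional
graph homomorphism. -/
structure IsCover {V₁ V₂ : Type} (G₁ : DirGraph V₁) (G₂ : DirGraph V₂) (ψ : V₁ → V₂) : Prop where
  hom : ∀ u v : V₁, (u, v) ∈ G₁.E → (ψ u, ψ v) ∈ G₂.E
  edgeSurj : ∀ e ∈ G₂.E, ∃ u v : V₁, (u, v) ∈ G₁.E ∧ (ψ u, ψ v) = e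
  posDir : ∀ u v v' : V₁, (u, v) ∈ G₁.E → (u, v') ∈ G₁.E → ψ v = ψ v'

/-- The induced linear map `ψ_*` on edge vectors: the coefficient of an edge `e`
of the target is the sum of the coefficients of its preimages. -/
noncomputable def pushVec {V₁ V₂ : Type} (ψ : V₁ → V₂) (a : V₁ × V₁ → ℝ) : V₂ × V₂ → ℝ :=
  fun e => ∑ᶠ e' ∈ {e' : V₁ × V₁ | edgeMap ψ e' = e}, a e'

/-- Euclidean distance on finite-dimensional coordinate spaces. -/
noncomputable def dE {ι : Type} [Fintype ι] (a b : ι → ℝ) : ℝ :=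
  Real.sqrt (∑ i : ι, (a i - b i) ^ 2)

/-- A sequence of covers `G₀ ← G₁ ← G₂ ← ⋯` of finite graphs, with `G₀`
the one-vertex graph (with a single loop). -/
structure CoverSystem : Type 1 where
  V : ℕ → Type
  fintypeV : ∀ n, Fintype (V n)
  G : ∀ n, DirGraph (V n)
  φ : ∀ n, V (n + 1) → V n
  cover : ∀ n, IsCover (G (n + 1)) (G n) (φ n)
  V0_single : ∀ x y : V 0, x = y

namespace CoverSystem

instance (S : CoverSystem) (n : ℕ) : Fintype (S.V n) := S.fintypeV n
instance (S : CoverSystem) (n : ℕ) : TopologicalSpace (S.V n) := ⊥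
instance (S : CoverSystem) (n : ℕ) : DiscreteTopology (S.V n) := ⟨rfl⟩

/-- `φ_{n+k, n}` as a composition of the covering maps. -/
def phiIter (S : CoverSystem) (n : ℕ) : ∀ k : ℕ, S.V (n + k) → S.V n
  | 0 => fun v => v
  | k + 1 => fun v => S.phiIter n k (S.φ (n + k) v)

/-- `φ_{m,n} : V m → V n` for `n ≤ m`. -/
def phiLE (S : CoverSystem) {m n : ℕ} (h : n ≤ m) (v : S.V m) : S.V n :=
  S.phiIter n (m - n) (cast (congrArg S.V (Nat.add_sub_cancel' h).symm) v)

/-- The inverse limit space `X` of the sequence of covers. -/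
def X (S : CoverSystem) : Type :=
  { x : ∀ n, S.V n // ∀ n, S.φ n (x (n + 1)) = x n }

instance (S : CoverSystem) : TopologicalSpace S.X :=
  inferInstanceAs (TopologicalSpace { x : ∀ n, S.V n // ∀ n, S.φ n (x (n + 1)) = x n })

instance (S : CoverSystem) : MeasurableSpace S.X := borel S.X
instance (S : CoverSystem) : BorelSpace S.X := ⟨rfl⟩

/-- The projection `φ_{∞,n} : X → V n`. -/
def proj (S : CoverSystem) (x : S.X) (n : ℕ) : S.V n := Subtype.val x n

/-- `f` is the shift map of the inverse limit: it is compatible with all the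
edge relations (this determines `f` uniquely). -/
def IsLimitMap (S : CoverSystem) (f : S.X → S.X) : Prop :=
  ∀ (x : S.X) (n : ℕ), (S.proj x n, S.proj (f x) n) ∈ (S.G n).E

/-- `U(v) = φ_{∞,n}⁻¹(v)`. -/
def USet (S : CoverSystem) {n : ℕ} (v : S.V n) : Set S.X := {x | S.proj x n = v}

/-- `U(e) = U(u) ∩ f⁻¹(U(v))` for an edge `e = (u,v)`. -/
def UEdge (S : CoverSystem) (f : S.X → S.X) {n : ℕ} (e : S.V n × S.V n) : Set S.X :=
  {x | S.proj x n = e.1 ∧ S.proj (f x) n = e.2}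

/-- `μ` is an `f`-invariant Borel measure. -/
def Invariant (S : CoverSystem) (f : S.X → S.X) (μ : Measure S.X) : Prop :=
  ∀ B : Set S.X, MeasurableSet B → μ (f ⁻¹' B) = μ B

/-- `μ` is ergodic: every invariant Borel set is null or conull. -/
def ErgodicM (S : CoverSystem) (f : S.X → S.X) (μ : Measure S.X) : Prop :=
  ∀ B : Set S.X, MeasurableSet B → f ⁻¹' B = B → μ B = 0 ∨ μ B = 1

/-- The vector `μ_n = Σ_{e ∈ E_n} μ(U(e))·e ∈ Δ_n` of a measure `μ`. -/
noncomputable def muVec (S : CoverSystem) (f : S.X → S.X) (μ : Measure S.X) (n : ℕ) :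
    S.V n × S.V n → ℝ :=
  fun e => (μ (S.UEdge f e)).toReal

/-- `Δ_∞`: compatible sequences of elements of the simplices `Δ_n = 𝒫(G_n)`. -/
def DeltaInf (S : CoverSystem) : Set (∀ n, S.V n × S.V n → ℝ) :=
  {x | (∀ n, MemP (S.G n) (x n)) ∧
    ∀ m n : ℕ, ∀ h : n ≤ m, pushVec (S.phiLE h) (x m) = x n}

/-- `C` is a system of circuits enumerated by `N'`. -/
def IsCircuitSystem (S : CoverSystem) (N' : Set ℕ)
    (C : ∀ n, Set (Set (S.V n × S.V n))) : Prop :=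
  ∀ n ∈ N', C n ⊆ circuitsOf (S.G n)

/-- The system of circuits `C` expresses the measure `μ`. -/
def Expresses (S : CoverSystem) (f : S.X → S.X) (μ : Measure S.X)
    (N' : Set ℕ) (C : ∀ n, Set (Set (S.V n × S.V n))) : Prop :=
  ∀ n ∈ N', ∃ s : Set (S.V n × S.V n) → ℝ,
    (∀ c ∈ C n, 0 ≤ s c) ∧ ∀ e, S.muVec f μ n e = ∑ᶠ c ∈ C n, s c * circTilde c e

/-- The system of circuits `C` expresses every ergodic invariant Borel
probability measure. -/
def ExpressesAllErgodic (S : CoverSystem) (f : S.X → S.X)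
    (N' : Set ℕ) (C : ∀ n, Set (Set (S.V n × S.V n))) : Prop :=
  ∀ μ : Measure S.X, IsProbabilityMeasure μ → S.Invariant f μ → S.ErgodicM f μ →
    S.Expresses f μ N' C

/-- `𝒞̄_∞`: the set of limit sequences of sequences of circuits chosen from `C`. -/
def limitsOf (S : CoverSystem) (N' : Set ℕ)
    (C : ∀ n, Set (Set (S.V n × S.V n))) : Set (∀ m, S.V m × S.V m → ℝ) :=
  {y | ∃ c : ∀ n, Set (S.V n × S.V n), (∀ n ∈ N', c n ∈ C n) ∧
    ∀ m : ℕ, Filter.Tendsto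
      (fun n : ℕ => if h : m ≤ n then dE (pushVec (S.phiLE h) (circTilde (c n))) (y m) else 1)
      (Filter.atTop ⊓ Filter.principal N') (nhds 0)}

end CoverSystem

/-!
Lift the initial vertex `w 0` to a point `x` of the inverse limit. If the orbit of `x` agrees
with the walk at level `j + 1` at time `i`, then `(f^[i] x, f^[i+1] x)` and the projected walk
edge start at the same vertex of `G (j + 1)`, so positive directionality of `φ j` makes them agree
at level `j` at time `i + 1`. Each step costs one level, so after `l ≤ m - n` steps the orbit
still agrees with the walk at level `n`.
-/

namespace CoverSystem

variable (S : CoverSystem)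

lemma phiLE_add (n k : ℕ) (v : S.V (n + k)) :
    S.phiLE (n.le_add_right k) v = S.phiIter n k v := by
  suffices ∀ j (_ : j = k) (hc : S.V (n + k) = S.V (n + j)),
      S.phiIter n j (cast hc v) = S.phiIter n k v from this _ (by omega) _
  rintro j rfl hc
  rfl

@[simp]
lemma phiLE_self (n : ℕ) (v : S.V n) : S.phiLE le_rfl v = v :=
  S.phiLE_add n 0 v

lemma phiLE_succ {n m : ℕ} (h : n ≤ m) (v : S.V (m + 1)) :
    S.phiLE (h.trans m.le_succ) v = S.phiLE h (S.φ m v) := by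
  obtain ⟨k, rfl⟩ := Nat.exists_eq_add_of_le h
  exact (S.phiLE_add n (k + 1) v).trans (S.phiLE_add n k _).symm

lemma phi_phiLE {j m : ℕ} (h : j + 1 ≤ m) (v : S.V m) :
    S.φ j (S.phiLE h v) = S.phiLE (j.le_succ.trans h) v := by
  induction m, h using Nat.le_induction with
  | base => rw [phiLE_self, phiLE_succ S le_rfl, phiLE_self]
  | succ m hm ih => rw [phiLE_succ S hm, ih, ← phiLE_succ]

lemma φ_proj_succ (x : S.X) (n : ℕ) : S.φ n (S.proj x (n + 1)) = S.proj x n := x.2 n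

lemma proj_eq_phiLE (x : S.X) {j m : ℕ} (h : j ≤ m) :
    S.proj x j = S.phiLE h (S.proj x m) := by
  induction m, h using Nat.le_induction with
  | base => rw [phiLE_self]
  | succ m hm ih => rw [phiLE_succ S hm, φ_proj_succ, ← ih]

lemma phiLE_mem_edges {j m : ℕ} (h : j ≤ m) {u v : S.V m} (he : (u, v) ∈ (S.G m).E) :
    (S.phiLE h u, S.phiLE h v) ∈ (S.G j).E := by
  induction m, h using Nat.le_induction with
  | base => simpa using he
  | succ m hm ih =>
    rw [phiLE_succ S hm, phiLE_succ S hm]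
    exact ih ((S.cover m).hom u v he)

lemma φ_surjective (n : ℕ) : Function.Surjective (S.φ n) := fun u => by
  obtain ⟨t, ht⟩ := (S.G n).surj_init u
  obtain ⟨a, b, -, hab⟩ := (S.cover n).edgeSurj (u, t) ht
  exact ⟨a, congrArg Prod.fst hab⟩

lemma exists_proj_eq {m : ℕ} (v : S.V m) : ∃ x : S.X, S.proj x m = v := by
  choose F hF using S.φ_surjective
  let g : ∀ k, S.V (m + k) := fun k => Nat.rec v (fun k gk => F (m + k) gk) k
  have hg : ∀ k, S.phiLE (m.le_add_right k) (g k) = v := by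
    intro k
    induction k with
    | zero => exact S.phiLE_self m v
    | succ k ih => rw [phiLE_succ S (m.le_add_right k), hF]; exact ih
  refine ⟨⟨fun j => S.phiLE (j.le_add_left m) (g j), fun j => ?_⟩, ?_⟩
  · rw [phi_phiLE, phiLE_succ S (j.le_add_left m), hF]
  · exact hg m

lemma proj_map_eq_phiLE_of_mem_edges {f : S.X → S.X} (hf : S.IsLimitMap f) {j m : ℕ}
    (h : j + 1 ≤ m) {u u' : S.V m} (he : (u, u') ∈ (S.G m).E) {y : S.X}
    (hy : S.proj y (j + 1) = S.phiLE h u) :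
    S.proj (f y) j = S.phiLE (j.le_succ.trans h) u' := by
  have hdir := (S.cover j).posDir _ _ _ (hy ▸ hf y (j + 1)) (S.phiLE_mem_edges h he)
  rw [← S.phi_phiLE h, ← hdir]
  exact (S.φ_proj_succ (f y) j).symm

lemma proj_iterate_eq_phiLE_of_isWalk {f : S.X → S.X} (hf : S.IsLimitMap f) {l m : ℕ}
    {w : Fin (l + 1) → S.V m} (hw : IsWalk (S.G m) l w) {x : S.X} (hx : S.proj x m = w 0) :
    ∀ (i : ℕ) (hi : i ≤ l) (j : ℕ) (hj : j + i ≤ m),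
      S.proj (f^[i] x) j = S.phiLE (by omega) (w ⟨i, by omega⟩) := by
  intro i
  induction i with
  | zero =>
    intro _ j hj
    rw [Function.iterate_zero_apply, S.proj_eq_phiLE x (by omega : j ≤ m), hx]
    rfl
  | succ i ih =>
    intro hi j hj
    rw [Function.iterate_succ_apply']
    exact S.proj_map_eq_phiLE_of_mem_edges hf (by omega) (hw ⟨i, by omega⟩)
      (ih (by omega) (j + 1) (by omega))

end CoverSystem

theorem image_walk_is_infty_projective_general (S : CoverSystem) (f : S.X → S.X)
    (hf : S.IsLimitMap f) (n l m : ℕ) (hm : n + l ≤ m)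
    (w : Fin (l + 1) → S.V m) (hw : IsWalk (S.G m) l w) :
    ∃ x : S.X, ∀ i : Fin (l + 1),
      S.phiLE (le_trans (Nat.le_add_right n l) hm) (w i) = S.proj (f^[i.1] x) n := by
  obtain ⟨x, hx⟩ := S.exists_proj_eq (w 0)
  exact ⟨x, fun i =>
    (S.proj_iterate_eq_phiLE_of_isWalk hf hw hx i.1 i.is_le n (by omega)).symm⟩

/-- For `m ≥ n + l`, every walk in `φ_{m,n}(W(G_m,l))` is
`∞`-projective: it is the projection of a real orbit of the inverse limit. -/
theorem image_walk_is_infty_projective (S : CoverSystem) (f : S.X → S.X)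
    (hf : S.IsLimitMap f) (n l m : ℕ) (hl : 0 < l) (hm : n + l ≤ m)
    (w : Fin (l + 1) → S.V m) (hw : IsWalk (S.G m) l w) :
    ∃ x : S.X, ∀ i : Fin (l + 1),
      S.phiLE (le_trans (Nat.le_add_right n l) hm) (w i) = S.proj (f^[i.1] x) n :=
  image_walk_is_infty_projective_general S f hf n l m hm w hw
end

section
/- For every graph G, 𝒫(G) = Hull(𝒞(G)), i.e. the set 𝒫(G) equals the set of all convex combinations Σ_{c∈𝒞(G)} s(c)·c̃ with s(c) ≥ 0 for all c ∈ 𝒞(G) and Σ_{c∈𝒞(G)} s(c) = 1. -/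
open Filter Topology MeasureTheory

/-! Circuit vectors are nonnegative flows, so convex combinations of the `c̃` lie in `𝒫(G)`.
Conversely, a nonzero nonnegative flow `a` has a circuit in its support: by conservation, the head
of an edge of positive weight is the tail of another one, so following such edges in the finite
graph closes up a circuit. Subtracting that circuit scaled by the minimum of `a` on it keeps a
nonnegative flow and kills an edge of the support, so induction on the support writes `a` as a
nonnegative combination of the `c̃`, whose weights add up to the total mass of `a`. -/

open Function

theorem Function.exists_iterate_mem_periodicPts {α : Type*} [Finite α] (f : α → α) (x : α) :
    ∃ n, f^[n] x ∈ periodicPts f := by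
  obtain ⟨m, n, hmn, heq⟩ := Finite.exists_ne_map_eq_of_infinite (f^[·] x)
  wlog hlt : m < n generalizing m n
  · exact this n m hmn.symm heq.symm (by omega)
  refine ⟨m, mk_mem_periodicPts (Nat.sub_pos_of_lt hlt) ?_⟩
  rw [IsPeriodicPt, IsFixedPt, ← iterate_add_apply, Nat.sub_add_cancel hlt.le]
  exact heq.symm

section Walks

variable {V : Type} {l : ℕ} {w : Fin (l + 1) → V}

theorem walkEdges_eq_range (w : Fin (l + 1) → V) :
    walkEdges w = Set.range fun i : Fin l => (w i.castSucc, w i.succ) :=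
  Set.ext fun _ => exists_congr fun _ => eq_comm

theorem injective_walkEdge
    (hdist : ∀ i j : Fin (l + 1), i < j → w i = w j → i = 0 ∧ j = Fin.last l) :
    Injective fun i : Fin l => (w i.castSucc, w i.succ) := by
  intro i j hij
  by_contra hne
  rcases lt_or_gt_of_ne hne with hlt | hlt
  · exact (Fin.castSucc_lt_last j).ne
      (hdist _ _ (Fin.castSucc_lt_castSucc_iff.mpr hlt) (Prod.ext_iff.1 hij).1).2
  · exact (Fin.castSucc_lt_last i).ne
      (hdist _ _ (Fin.castSucc_lt_castSucc_iff.mpr hlt) (Prod.ext_iff.1 hij).1.symm).2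

/-- Rotating the steps of the closed walk by one turns their heads into their tails. -/
theorem sum_comp_succ_eq_sum_comp_castSucc {M : Type*} [AddCommMonoid M]
    (hclose : w (Fin.last l) = w 0) (f : V → M) :
    ∑ i : Fin l, f (w i.succ) = ∑ i : Fin l, f (w i.castSucc) := by
  rcases l with _ | m
  · simp
  have hrot : ∀ i, w i.succ = w (finRotate (m + 1) i).castSucc := by
    intro i
    by_cases hi : i = Fin.last m
    · rw [hi, finRotate_last, Fin.succ_last, hclose, Fin.castSucc_zero]
    · congr 1
      ext
      rw [Fin.val_castSucc, coe_finRotate_of_ne_last hi, Fin.val_succ]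
  simp_rw [hrot]
  exact Equiv.sum_comp (finRotate (m + 1)) fun i => f (w i.castSucc)

end Walks

section CircVec

variable {V : Type}

theorem circVec_nonneg (c : Set (V × V)) (e : V × V) : 0 ≤ circVec c e :=
  Set.indicator_nonneg (fun _ _ => zero_le_one) e

theorem circTilde_eq_smul (c : Set (V × V)) : circTilde c = (c.ncard : ℝ)⁻¹ • circVec c :=
  rfl

theorem sum_circVec [Fintype V] (c : Set (V × V)) : ∑ e, circVec c e = c.ncard := by
  classical
  simp [circVec, Set.indicator_apply, Finset.sum_boole, Set.ncard_eq_toFinset_card']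

theorem support_sub_smul_circVec_ssubset {a : V × V → ℝ} {c : Set (V × V)} {e₀ : V × V}
    (he₀ : e₀ ∈ c) (hpos : ∀ e ∈ c, 0 < a e) :
    support (a - a e₀ • circVec c) ⊂ support a := by
  have hsub : support (a - a e₀ • circVec c) ⊆ support a := fun e he => by
    by_cases hec : e ∈ c
    · exact (hpos e hec).ne'
    · simpa [circVec, hec] using he
  refine (Set.ssubset_iff_of_subset hsub).2 ⟨e₀, (hpos e₀ he₀).ne', ?_⟩
  simp [circVec, he₀]

variable [DecidableEq V] {ι : Type*} [Fintype ι] {e : ι → V × V}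

theorem circVec_range_apply (he : Injective e) (x : V × V) :
    circVec (Set.range e) x = ∑ i, if e i = x then 1 else 0 := by
  classical
  by_cases hx : x ∈ Set.range e
  · obtain ⟨j, rfl⟩ := hx
    simp [circVec, he.eq_iff]
  · simp_all [circVec]

variable [Fintype V]

theorem sum_circVec_range_in (he : Injective e) (v : V) :
    ∑ u, circVec (Set.range e) (u, v) = ∑ i, if (e i).2 = v then 1 else 0 := by
  simp_rw [circVec_range_apply he]
  rw [Finset.sum_comm]
  refine Finset.sum_congr rfl fun i _ => ?_
  simp only [Prod.ext_iff, ite_and, Finset.sum_ite_eq, Finset.mem_univ, if_true]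

theorem sum_circVec_range_out (he : Injective e) (v : V) :
    ∑ u, circVec (Set.range e) (v, u) = ∑ i, if (e i).1 = v then 1 else 0 := by
  simp_rw [circVec_range_apply he]
  rw [Finset.sum_comm]
  refine Finset.sum_congr rfl fun i _ => ?_
  simp only [Prod.ext_iff, ite_and, Finset.sum_ite_eq, Finset.mem_univ, if_true,
    Finset.sum_ite_irrel, Finset.sum_const_zero]

end CircVec

section Circuits

variable {V : Type} {G : DirGraph V} {c : Set (V × V)}

theorem IsCircuitIn.subset (hc : IsCircuitIn G c) : c ⊆ G.E := by
  obtain ⟨l, -, w, hwalk, -, -, rfl⟩ := hc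
  rintro _ ⟨i, rfl⟩
  exact hwalk i

theorem IsCircuitIn.nonempty (hc : IsCircuitIn G c) : c.Nonempty := by
  obtain ⟨l, hl, w, -, -, -, rfl⟩ := hc
  exact ⟨_, ⟨⟨0, hl⟩, rfl⟩⟩

theorem IsCircuitIn.ncard_pos [Finite V] (hc : IsCircuitIn G c) : 0 < c.ncard :=
  (Set.ncard_pos c.toFinite).2 hc.nonempty

theorem IsCircuitIn.ncard_smul_circTilde [Finite V] (hc : IsCircuitIn G c) :
    (c.ncard : ℝ) • circTilde c = circVec c := by
  rw [circTilde_eq_smul, smul_smul, mul_inv_cancel₀ (Nat.cast_ne_zero.2 hc.ncard_pos.ne'),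
    one_smul]

theorem IsCircuitIn.sum_circTilde [Fintype V] (hc : IsCircuitIn G c) :
    ∑ e, circTilde c e = 1 := by
  simp only [circTilde, ← Finset.mul_sum, sum_circVec]
  exact inv_mul_cancel₀ (Nat.cast_ne_zero.2 hc.ncard_pos.ne')

theorem IsCircuitIn.sum_circVec_in_eq_out [Fintype V] (hc : IsCircuitIn G c) (v : V) :
    ∑ u, circVec c (u, v) = ∑ u, circVec c (v, u) := by
  classical
  obtain ⟨l, -, w, -, hclose, hdist, rfl⟩ := hc
  rw [walkEdges_eq_range, sum_circVec_range_in (injective_walkEdge hdist),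
    sum_circVec_range_out (injective_walkEdge hdist)]
  exact sum_comp_succ_eq_sum_comp_castSucc hclose fun u => if u = v then 1 else 0

theorem isCircuitIn_walkEdges_iterate {g : V → V} {y : V} (hy : y ∈ periodicPts g)
    (hE : ∀ k, (g^[k] y, g^[k + 1] y) ∈ G.E) :
    IsCircuitIn G (walkEdges fun k : Fin (minimalPeriod g y + 1) => g^[k] y) := by
  have hpos := minimalPeriod_pos_of_mem_periodicPts hy
  refine ⟨_, hpos, _, fun i => hE i, iterate_minimalPeriod, fun i j hij hw => ?_, rfl⟩
  have hij : (i : ℕ) < j := hij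
  have hj : (j : ℕ) = minimalPeriod g y := by
    by_contra hj
    exact hij.ne ((iterate_eq_iterate_iff_of_lt_minimalPeriod (by omega) (by omega)).1 hw)
  have hi : g^[i] y = g^[0] y := by rw [hw, hj, iterate_minimalPeriod, iterate_zero_apply]
  exact ⟨Fin.ext ((iterate_eq_iterate_iff_of_lt_minimalPeriod (by omega) hpos).1 hi),
    Fin.ext hj⟩

theorem exists_isCircuitIn_subset [Finite V] {R : Set (V × V)} (hR : R ⊆ G.E) {S : Set V}
    (hS : S.Nonempty) (hsucc : ∀ v ∈ S, ∃ u ∈ S, (v, u) ∈ R) :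
    ∃ c, IsCircuitIn G c ∧ c ⊆ R := by
  obtain ⟨x, hx⟩ := hS
  choose! g hgS hgR using hsucc
  obtain ⟨p, hp⟩ := exists_iterate_mem_periodicPts g x
  have horbit : ∀ k, (g^[k] (g^[p] x), g^[k + 1] (g^[p] x)) ∈ R := fun k => by
    rw [iterate_succ_apply', ← iterate_add_apply]
    exact hgR _ (Set.MapsTo.iterate hgS (k + p) hx)
  refine ⟨_, isCircuitIn_walkEdges_iterate hp fun k => hR (horbit k), ?_⟩
  rintro _ ⟨i, rfl⟩
  exact horbit i

variable [Finite V]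

noncomputable def circuitFinset (G : DirGraph V) : Finset (Set (V × V)) :=
  (Set.toFinite (circuitsOf G)).toFinset

theorem mem_circuitFinset : c ∈ circuitFinset G ↔ IsCircuitIn G c :=
  Set.Finite.mem_toFinset _

end Circuits

section MemI

variable {V : Type} [Fintype V] {G : DirGraph V} {a b : V × V → ℝ}

theorem memI_zero : MemI G 0 :=
  ⟨⟨fun _ => le_rfl, fun _ _ => rfl⟩, fun _ => by simp⟩

theorem MemI.add (ha : MemI G a) (hb : MemI G b) : MemI G (a + b) :=
  ⟨⟨fun e => add_nonneg (ha.1.1 e) (hb.1.1 e),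
      fun e he => by simp [ha.1.2 e he, hb.1.2 e he]⟩,
    fun v => by simp [Finset.sum_add_distrib, ha.2 v, hb.2 v]⟩

theorem MemI.sub (ha : MemI G a) (hb : MemI G b) (hba : b ≤ a) : MemI G (a - b) :=
  ⟨⟨fun e => sub_nonneg.2 (hba e), fun e he => by simp [ha.1.2 e he, hb.1.2 e he]⟩,
    fun v => by simp [Finset.sum_sub_distrib, ha.2 v, hb.2 v]⟩

theorem MemI.smul (ha : MemI G a) {t : ℝ} (ht : 0 ≤ t) : MemI G (t • a) :=
  ⟨⟨fun e => mul_nonneg ht (ha.1.1 e), fun e he => by simp [ha.1.2 e he]⟩,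
    fun v => by simp [← Finset.mul_sum, ha.2 v]⟩

theorem memI_sum {ι : Type*} (s : Finset ι) {f : ι → V × V → ℝ}
    (hf : ∀ i ∈ s, MemI G (f i)) :
    MemI G (∑ i ∈ s, f i) :=
  Finset.sum_induction f (MemI G) (fun _ _ => MemI.add) memI_zero hf

theorem IsCircuitIn.memI_circVec {c : Set (V × V)} (hc : IsCircuitIn G c) :
    MemI G (circVec c) :=
  ⟨⟨circVec_nonneg c, fun _ he => Set.indicator_of_notMem (fun hec => he (hc.subset hec)) _⟩,
    hc.sum_circVec_in_eq_out⟩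

theorem IsCircuitIn.memI_circTilde {c : Set (V × V)} (hc : IsCircuitIn G c) :
    MemI G (circTilde c) :=
  hc.memI_circVec.smul (inv_nonneg.2 (Nat.cast_nonneg _))

theorem sum_sum_smul_circTilde {C : Finset (Set (V × V))} (hC : ∀ c ∈ C, IsCircuitIn G c)
    (s : Set (V × V) → ℝ) :
    ∑ e, (∑ c ∈ C, s c • circTilde c) e = ∑ c ∈ C, s c := by
  simp only [Finset.sum_apply, Pi.smul_apply, smul_eq_mul]
  rw [Finset.sum_comm]
  exact Finset.sum_congr rfl fun c hc => by
    rw [← Finset.mul_sum, (hC c hc).sum_circTilde, mul_one]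

theorem MemI.exists_isCircuitIn_pos (ha : MemI G a) (h0 : a ≠ 0) :
    ∃ c, IsCircuitIn G c ∧ ∀ e ∈ c, 0 < a e := by
  obtain ⟨⟨hnn, hsupp⟩, hbal⟩ := ha
  obtain ⟨e₀, he₀⟩ := Function.ne_iff.1 h0
  have hR : {e | 0 < a e} ⊆ G.E := fun e he => by_contra fun hE => he.ne' (hsupp e hE)
  refine exists_isCircuitIn_subset hR (S := {v | ∃ u, 0 < a (v, u)})
    ⟨e₀.1, e₀.2, (hnn e₀).lt_of_ne' he₀⟩ ?_
  rintro v ⟨u, hvu⟩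
  have hin : ∑ _x : V, (0 : ℝ) < ∑ x, a (u, x) := by
    rw [Finset.sum_const_zero, ← hbal u]
    exact hvu.trans_le (Finset.single_le_sum (fun x _ => hnn (x, u)) (Finset.mem_univ v))
  obtain ⟨x, -, hx⟩ := Finset.exists_lt_of_sum_lt hin
  exact ⟨u, ⟨x, hx⟩, hvu⟩

end MemI

theorem MemI.exists_eq_sum_smul_circTilde {V : Type} [Fintype V] {G : DirGraph V}
    {a : V × V → ℝ} (ha : MemI G a) :
    ∃ s : Set (V × V) → ℝ, (∀ c, 0 ≤ s c) ∧
      a = ∑ c ∈ circuitFinset G, s c • circTilde c := by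
  classical
  by_cases h0 : a = 0
  · exact ⟨0, fun _ => le_rfl, by simp [h0]⟩
  obtain ⟨c, hc, hpos⟩ := ha.exists_isCircuitIn_pos h0
  obtain ⟨e₀, he₀, hmin⟩ := Set.exists_min_image c a c.toFinite hc.nonempty
  have hle : a e₀ • circVec c ≤ a := fun e => by
    by_cases hec : e ∈ c
    · simpa [circVec, hec] using hmin e hec
    · simpa [circVec, hec] using ha.1.1 e
  have ha' : MemI G (a - a e₀ • circVec c) :=
    ha.sub (hc.memI_circVec.smul (hpos e₀ he₀).le) hle
  have hlt := Set.ncard_lt_ncard (support_sub_smul_circVec_ssubset he₀ hpos)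
  obtain ⟨s, hs, hsum⟩ := MemI.exists_eq_sum_smul_circTilde ha'
  have ht : 0 ≤ Pi.single c (a e₀ * c.ncard) :=
    (Pi.single_nonneg (α := fun _ => ℝ)).2 (mul_nonneg (hpos e₀ he₀).le (Nat.cast_nonneg _))
  refine ⟨s + Pi.single c (a e₀ * c.ncard), fun d => add_nonneg (hs d) (ht d), ?_⟩
  rw [sub_eq_iff_eq_add] at hsum
  conv_lhs => rw [hsum, ← hc.ncard_smul_circTilde, smul_smul]
  simp [add_smul, Finset.sum_add_distrib, Pi.single_apply, ite_smul, mem_circuitFinset.2 hc]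
termination_by (support a).ncard
decreasing_by exact hlt

/-- `𝒫(G) = Hull(𝒞(G))`: the elements of `𝒫(G)` are exactly
the convex combinations of the normalized circuits `c̃`. -/
theorem memP_iff_convex_combination_of_circuits {V : Type} [Fintype V]
    (G : DirGraph V) (a : V × V → ℝ) :
    MemP G a ↔ ∃ s : Set (V × V) → ℝ, (∀ c, 0 ≤ s c) ∧
      (∑ᶠ c ∈ circuitsOf G, s c) = 1 ∧
      ∀ e : V × V, a e = ∑ᶠ c ∈ circuitsOf G, s c * circTilde c e := by
  simp only [finsum_mem_eq_finite_toFinset_sum _ (Set.toFinite (circuitsOf G))]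
  change _ ↔ ∃ s : Set (V × V) → ℝ, _ ∧ ∑ c ∈ circuitFinset G, s c = 1 ∧
    ∀ e, a e = ∑ c ∈ circuitFinset G, s c * circTilde c e
  have hC : ∀ c ∈ circuitFinset G, IsCircuitIn G c := fun _ => mem_circuitFinset.1
  constructor
  · rintro ⟨hI, hmass⟩
    obtain ⟨s, hs, rfl⟩ := hI.exists_eq_sum_smul_circTilde
    exact ⟨s, hs, by rwa [sum_sum_smul_circTilde hC] at hmass,
      fun e => by simp [Finset.sum_apply]⟩
  · rintro ⟨s, hs, hmass, ha⟩
    obtain rfl : a = ∑ c ∈ circuitFinset G, s c • circTilde c :=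
      funext fun e => by simpa [Finset.sum_apply] using ha e
    exact ⟨memI_sum _ fun c hc => (hC c hc).memI_circTilde.smul (hs c),
      by rw [sum_sum_smul_circTilde hC, hmass]⟩
end
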